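/- arXiv:math/9906003 — 2 statements merged into one kernel-verified Lean document; each statement's English description precedes it below -/
import Mathlib

section
/- Let (Ω, b, B) be a mixed complex of vector spaces (b of degree −1, B of degree +1, with b² = B² = bB + Bb = 0), and suppose there exists N such that the homology of (Ω, b) vanishes in all degrees n > N. Then for every cycle f = (f_0, f_2, …, f_{2n}) ∈ ⊕_{p≥0} Ω_{2n−2p} of the total complex with differential b + B, where 2n > N, there exists a cycle F = (F_{2m})_{m≥0} in the even part ∏_{m≥0} Ω_{2m} of the periodic complex (with differential b + B) whose truncation to degrees ≤ 2n equals f. -/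
noncomputable def stmt4Aux (K : Type) [Field K] (V : ℕ → Type) [∀ n, AddCommGroup (V n)]
    [∀ n, Module K (V n)]
    (b : ∀ n, V (n + 1) →ₗ[K] V n) (B : ∀ n, V n →ₗ[K] V (n + 1))
    (hBB : ∀ n (x : V n), B (n + 1) (B n x) = 0)
    (hbB : ∀ n (x : V (n + 1)), b (n + 1) (B (n + 1) x) + B n (b n x) = 0)
    (N : ℕ)
    (hvan : ∀ m, N ≤ m → ∀ x : V (m + 1), b m x = 0 → ∃ y : V (m + 2), b (m + 1) y = x)
    (n : ℕ) (hn : N < 2 * n) (f : ∀ m, V (2 * m))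
    (hcyc : ∀ m, m < n → b (2 * m + 1) (f (m + 1)) + B (2 * m) (f m) = 0) :
    ∀ m : ℕ, Σ' (x : V (2 * m)) (y : V (2 * (m + 1))),
      (b (2 * m + 1) y + B (2 * m) x = 0) ∧ (m ≤ n → x = f m) ∧ (m + 1 ≤ n → y = f (m + 1))
  | 0 => ⟨f 0, f 1, hcyc 0 (by omega), fun _ => rfl, fun _ => rfl⟩
  | (m + 1) =>
    let p := stmt4Aux K V b B hBB hbB N hvan n hn f hcyc m
    if h : m + 2 ≤ n then
      ⟨p.2.1, f (m + 2), by
        rw [p.2.2.2.2 (by omega)]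
        exact hcyc (m + 1) (by omega),
        fun _ => p.2.2.2.2 (by omega), fun _ => rfl⟩
    else
      have h2 : b (2 * m + 2) (B (2 * m + 2) p.2.1) = 0 := by
        have hby : b (2 * m + 1) p.2.1 = -(B (2 * m) p.1) :=
          eq_neg_of_add_eq_zero_left p.2.2.1
        have h1 := hbB (2 * m + 1) p.2.1
        rw [hby, map_neg, hBB] at h1
        simpa using h1
      have hz : b (2 * m + 2) (-(B (2 * m + 2) p.2.1)) = 0 := by rw [map_neg, h2, neg_zero]
      have hex := hvan (2 * m + 2) (by omega) (-(B (2 * m + 2) p.2.1)) hz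
      ⟨p.2.1, hex.choose, by
        show b (2 * m + 2 + 1) hex.choose + B (2 * m + 2) p.2.1 = 0
        rw [hex.choose_spec]; abel,
        fun hle => p.2.2.2.2 (by omega), fun hle => absurd hle h⟩

/-- Let `(Ω, b, B)` be a mixed complex of vector spaces (`V n = Ω_n`,
`b n : Ω_{n+1} → Ω_n`, `B n : Ω_n → Ω_{n+1}`, `b² = B² = bB + Bb = 0`), whose homology with
respect to `b` (Hochschild homology) vanishes in all degrees `> N`: every `b`-cycle in degree
`m + 1 > N` is a `b`-boundary.  Then for every cycle `f = (f_0, f_2, …, f_{2n})` of the total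
complex `Tot_{2n} = ⊕_{p ≥ 0} Ω_{2n-2p}` with differential `b + B` (represented by
`f : ∀ m, V (2*m)` supported in `m ≤ n`, with cycle equations in components `Ω_{2m+1}`, `m < n`),
where `2n > N`, there exists a cycle `F = (F_{2m})_{m ≥ 0}` of the even part `∏_m Ω_{2m}` of the
periodic complex whose truncation to degrees `≤ 2n` equals `f`. -/
theorem stmt4 (K : Type) [Field K] (V : ℕ → Type) [∀ n, AddCommGroup (V n)]
    [∀ n, Module K (V n)]
    (b : ∀ n, V (n + 1) →ₗ[K] V n) (B : ∀ n, V n →ₗ[K] V (n + 1))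
    (hbb : ∀ n (x : V (n + 2)), b n (b (n + 1) x) = 0)
    (hBB : ∀ n (x : V n), B (n + 1) (B n x) = 0)
    (hbB0 : ∀ x : V 0, b 0 (B 0 x) = 0)
    (hbB : ∀ n (x : V (n + 1)), b (n + 1) (B (n + 1) x) + B n (b n x) = 0)
    (N : ℕ)
    (hvan : ∀ m, N ≤ m → ∀ x : V (m + 1), b m x = 0 → ∃ y : V (m + 2), b (m + 1) y = x)
    (n : ℕ) (hn : N < 2 * n) (f : ∀ m, V (2 * m))
    (hsupp : ∀ m, n < m → f m = 0)
    (hcyc : ∀ m, m < n → b (2 * m + 1) (f (m + 1)) + B (2 * m) (f m) = 0) :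
    ∃ F : ∀ m, V (2 * m),
      (∀ m, b (2 * m + 1) (F (m + 1)) + B (2 * m) (F m) = 0) ∧
      (∀ m, m ≤ n → F m = f m) := by
  set G := stmt4Aux K V b B hBB hbB N hvan n hn f hcyc with hG
  have hcons : ∀ m, (G (m + 1)).1 = (G m).2.1 := by
    intro m
    rw [hG]
    conv_lhs => rw [stmt4Aux]
    by_cases h : m + 2 ≤ n <;> simp [h]
  refine ⟨fun m => (G m).1, fun m => ?_, fun m hm => (G m).2.2.2.1 hm⟩
  show b (2 * m + 1) ((G (m + 1)).1) + B (2 * m) ((G m).1) = 0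
  rw [hcons m]
  exact (G m).2.2.1
end

section
/- Let (Ω, b, B) be a mixed complex with H_n(Ω, b) = 0 for all n > N. Let F = (F_{2m})_{m≥0} be a cycle in the even periodic complex, and suppose its truncation T(F) = (F_0, F_2, …, F_{2n}) (with 2n > N) is a boundary in the total complex Tot_{2n} = ⊕_p Ω_{2n−2p}, i.e. there exists h = (h_1, h_3, …, h_{2n+1}) with (b + B)h = T(F). Then F is a boundary in the periodic complex: there exists H ∈ ∏_{m≥0} Ω_{2m+1} with (b + B)H = F. -/
/-- Let `(Ω, b, B)` be a mixed complex (`V n = Ω_n`, `b n : Ω_{n+1} → Ω_n`,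
`B n : Ω_n → Ω_{n+1}`, `b² = B² = bB + Bb = 0`) with `H_m(Ω, b) = 0` for all `m > N`.
Let `F = (F_{2m})_{m≥0}` be a cycle in the even periodic complex `∏_m Ω_{2m}` (differential
`b + B`), and suppose its truncation `T(F) = (F_0, …, F_{2n})` (with `2n > N`) is a boundary in
the total complex `Tot_{2n}`: there is `h = (h_1, h_3, …, h_{2n+1})` (represented by
`h : ∀ m, V (2*m+1)` supported in `m ≤ n`) with `(b + B) h = T(F)`.  Then `F` is a boundary in
the periodic complex: there exists `H ∈ ∏_m Ω_{2m+1}` with `(b + B) H = F`. -/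
theorem stmt5 (K : Type) [Field K] (V : ℕ → Type) [∀ n, AddCommGroup (V n)]
    [∀ n, Module K (V n)]
    (b : ∀ n, V (n + 1) →ₗ[K] V n) (B : ∀ n, V n →ₗ[K] V (n + 1))
    (hbb : ∀ n (x : V (n + 2)), b n (b (n + 1) x) = 0)
    (hBB : ∀ n (x : V n), B (n + 1) (B n x) = 0)
    (hbB0 : ∀ x : V 0, b 0 (B 0 x) = 0)
    (hbB : ∀ n (x : V (n + 1)), b (n + 1) (B (n + 1) x) + B n (b n x) = 0)
    (N : ℕ)
    (hvan : ∀ m, N ≤ m → ∀ x : V (m + 1), b m x = 0 → ∃ y : V (m + 2), b (m + 1) y = x)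
    (n : ℕ) (hn : N < 2 * n)
    (F : ∀ m, V (2 * m))
    (hFcyc : ∀ m, b (2 * m + 1) (F (m + 1)) + B (2 * m) (F m) = 0)
    (h : ∀ m, V (2 * m + 1))
    (hhsupp : ∀ m, n < m → h m = 0)
    (hh0 : b 0 (h 0) = F 0)
    (hhb : ∀ m, m < n → b (2 * m + 2) (h (m + 1)) + B (2 * m + 1) (h m) = F (m + 1)) :
    ∃ H : ∀ m, V (2 * m + 1),
      b 0 (H 0) = F 0 ∧
      ∀ m, b (2 * m + 2) (H (m + 1)) + B (2 * m + 1) (H m) = F (m + 1) := by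
  classical
  let F' : ∀ m, V (2 * m + 2) := fun m => F (m + 1)
  have hFcyc' : ∀ m, b (2 * m + 1) (F' m) + B (2 * m) (F m) = 0 := hFcyc
  have hhb' : ∀ m, m < n →
      b (2 * m + 2) (h (m + 1)) + B (2 * m + 1) (h m) = F' m := hhb
  have invh : ∀ m, m ≤ n → B (2 * m) (F m - b (2 * m) (h m)) = 0 := by
    intro m hm
    match m with
    | 0 => rw [hh0, sub_self, map_zero]
    | Nat.succ m =>
        have hb := hhb' m (by omega)
        show B (2 * m + 2) (F' m - b (2 * m + 2) (h (m + 1))) = 0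
        have e : F' m - b (2 * m + 2) (h (m + 1)) = B (2 * m + 1) (h m) := by
          rw [← hb]; abel
        rw [e]
        exact hBB (2 * m + 1) (h m)
  have step : ∀ m, n ≤ m → ∀ y : V (2 * m + 1), B (2 * m) (F m - b (2 * m) y) = 0 →
      ∃ z : V (2 * m + 3), b (2 * m + 2) z = F' m - B (2 * m + 1) y ∧
        B (2 * m + 2) (F' m - b (2 * m + 2) z) = 0 := by
    intro m hm y hy
    have hx : b (2 * m + 1) (F' m - B (2 * m + 1) y) = 0 := by
      have h1 := hFcyc' m
      have h2 := hbB (2 * m) y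
      rw [map_sub] at hy ⊢
      rw [eq_neg_of_add_eq_zero_left h1, eq_neg_of_add_eq_zero_left h2]
      rw [sub_eq_zero] at hy
      rw [hy]; abel
    obtain ⟨z, hz⟩ := hvan (2 * m + 1) (by omega) _ hx
    have hz' : b (2 * m + 2) z = F' m - B (2 * m + 1) y := hz
    refine ⟨z, hz', ?_⟩
    rw [hz']
    have e : F' m - (F' m - B (2 * m + 1) y) = B (2 * m + 1) y := by abel
    rw [e]
    exact hBB (2 * m + 1) y
  let g : ∀ m, {y : V (2 * m + 1) // B (2 * m) (F m - b (2 * m) y) = 0} := fun m =>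
    Nat.rec ⟨h 0, invh 0 (Nat.zero_le n)⟩
      (fun m p =>
        if hm : m + 1 ≤ n then ⟨h (m + 1), invh (m + 1) hm⟩
        else ⟨(step m (by omega) p.1 p.2).choose,
          (step m (by omega) p.1 p.2).choose_spec.2⟩) m
  have geq : ∀ m, m ≤ n → (g m).1 = h m := by
    intro m hm
    cases m with
    | zero => rfl
    | succ m => simp only [g, Nat.rec_add_one, dif_pos hm]
  have gneg : ∀ m (hm : ¬ (m + 1 ≤ n)) (h1 : n ≤ m),
      (g (m + 1)).1 = (step m h1 (g m).1 (g m).2).choose := by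
    intro m hm h1
    simp only [g, Nat.rec_add_one, dif_neg hm]
  refine ⟨fun m => (g m).1, ?_, ?_⟩
  · show b 0 (h 0) = F 0
    exact hh0
  · intro m
    show b (2 * m + 2) ((g (m + 1)).1) + B (2 * m + 1) ((g m).1) = F' m
    by_cases hm : m + 1 ≤ n
    · rw [geq (m + 1) hm, geq m (by omega)]
      exact hhb' m (by omega)
    · have h1 : n ≤ m := by omega
      rw [gneg m hm h1, (step m h1 (g m).1 (g m).2).choose_spec.1]
      abel
end
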